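/- ᾱ is subadditive for sets disjoint at infinity: if E, F ⊆ ℝⁿ satisfy (E ∩ F) \ B_r(q) = ∅ for some r > 0 and q ∈ ℝⁿ, then ᾱ(E ∪ F) ≤ ᾱ(E) + ᾱ(F); moreover, if α(E) and α(F) both exist, then α(E ∪ F) exists and equals α(E) + α(F). -/

import Mathlib

open MeasureTheory Filter Metric Topology

/-- The weighted tail integral `∫_{ℝⁿ \ B_r(q)} χ_E(y) / |q - y|^{n+s} dy`. -/
noncomputable def tailIntegral (n : ℕ) (E : Set (EuclideanSpace ℝ (Fin n))) (s : ℝ)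
    (q : EuclideanSpace ℝ (Fin n)) (r : ℝ) : ℝ :=
  ∫ y in (ball q r)ᶜ, E.indicator (fun _ => (1 : ℝ)) y / ‖q - y‖ ^ ((n : ℝ) + s)

/-- `α_s(E) = s · ∫_{ℝⁿ \ B₁} χ_E(y)/|y|^{n+s} dy`. -/
noncomputable def alphaS (n : ℕ) (E : Set (EuclideanSpace ℝ (Fin n))) (s : ℝ) : ℝ :=
  s * tailIntegral n E s 0 1

/-- `ᾱ(E) = limsup_{s→0⁺} α_s(E)`. -/
noncomputable def alphaBar (n : ℕ) (E : Set (EuclideanSpace ℝ (Fin n))) : ℝ :=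
  limsup (alphaS n E) (𝓝[>] (0 : ℝ))

/-!
Integrating `χ_{E ∪ F} + χ_{E ∩ F} = χ_E + χ_F` against the kernel gives
`α_s(E ∪ F) + α_s(E ∩ F) = α_s(E) + α_s(F)`. Polar coordinates give
`s ∫_{|y| ≥ 1} |y|^{-n-s} dy = n |B₁|`, so every `α_s` lies in `[0, n |B₁|]` and the limsups
behave additively. Since `E ∩ F` is bounded, `α_s(E ∩ F) ≤ s |E ∩ F| → 0`.
-/

open Set Module

section NormRpow

variable {E : Type*} [NormedAddCommGroup E] [NormedSpace ℝ E] [FiniteDimensional ℝ E]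
  [MeasurableSpace E] [BorelSpace E] (μ : Measure E) [μ.IsAddHaarMeasure] {s : ℝ}

lemma integrableOn_compl_ball_norm_rpow_neg (hs : 0 < s) :
    IntegrableOn (fun x : E ↦ ‖x‖ ^ (-(finrank ℝ E + s))) (ball 0 1)ᶜ μ := by
  set p : ℝ := finrank ℝ E + s
  refine ((integrable_one_add_norm (μ := μ) (r := p) (by linarith)).const_mul
    ((2 : ℝ) ^ p)).integrableOn.mono' (Measurable.aestronglyMeasurable (by fun_prop)) ?_
  refine (ae_restrict_iff' measurableSet_ball.compl).2 (.of_forall fun x hx ↦ ?_)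
  have hx1 : 1 ≤ ‖x‖ := by simpa using hx
  have hp : 0 ≤ p := by positivity
  calc ‖‖x‖ ^ (-p)‖ = ‖x‖ ^ (-p) := Real.norm_of_nonneg (by positivity)
    _ ≤ ((1 + ‖x‖) / 2) ^ (-p) :=
        Real.rpow_le_rpow_of_nonpos (by positivity) (by linarith) (by linarith)
    _ = 2 ^ p * (1 + ‖x‖) ^ (-p) := by
        rw [Real.div_rpow (by positivity) zero_le_two, Real.rpow_neg zero_le_two,
          div_inv_eq_mul, mul_comm]

lemma integral_compl_ball_norm_rpow_neg (hs : 0 < s) :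
    ∫ x in (ball (0 : E) 1)ᶜ, ‖x‖ ^ (-(finrank ℝ E + s)) ∂μ
      = finrank ℝ E * μ.real (ball 0 1) / s := by
  rcases subsingleton_or_nontrivial E with hE | hE
  · have : (ball (0 : E) 1)ᶜ = ∅ := by ext x; simp [Subsingleton.elim x 0]
    simp [this, finrank_zero_of_subsingleton]
  set d := finrank ℝ E
  have hd : 0 < d := finrank_pos
  set g : ℝ → ℝ := (Ici 1).indicator fun t ↦ t ^ (-(d + s))
  have hcompl : (ball (0 : E) 1)ᶜ = (‖·‖) ⁻¹' Ici 1 := by ext; simp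
  have hradial : ∫ t in Ioi (0 : ℝ), t ^ (d - 1) • g t = 1 / s := by
    have hpow : ∀ t ∈ Ioi (1 : ℝ), t ^ (d - 1) * t ^ (-(d + s)) = t ^ (-1 - s) := by
      intro t ht
      rw [← Real.rpow_natCast, ← Real.rpow_add (zero_lt_one.trans ht), Nat.cast_sub hd]
      ring_nf
    simp only [g, smul_eq_mul, ← indicator_mul_right (Ici 1) fun t : ℝ ↦ t ^ (d - 1)]
    rw [setIntegral_indicator measurableSet_Ici,
      inter_eq_self_of_subset_right (Ici_subset_Ioi.2 zero_lt_one), integral_Ici_eq_integral_Ioi,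
      setIntegral_congr_fun measurableSet_Ioi hpow,
      integral_Ioi_rpow_of_lt (by linarith) zero_lt_one, Real.one_rpow]
    ring_nf
  rw [← integral_indicator measurableSet_ball.compl, hcompl]
  have hg : ∀ x : E, ((‖·‖) ⁻¹' Ici 1).indicator (fun x ↦ ‖x‖ ^ (-(d + s : ℝ))) x = g ‖x‖ :=
    fun _ ↦ indicator_comp_right (‖·‖) (g := fun t : ℝ ↦ t ^ (-(d + s)))
  simp_rw [hg]
  rw [integral_fun_norm_addHaar μ g, hradial, nsmul_eq_mul, smul_eq_mul]
  ring

end NormRpow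

lemma indicator_union_add_indicator_inter {α M : Type*} [AddCommMonoid M] (s t : Set α)
    (f : α → M) (x : α) :
    (s ∪ t).indicator f x + (s ∩ t).indicator f x = s.indicator f x + t.indicator f x := by
  by_cases hs : x ∈ s <;> by_cases ht : x ∈ t <;> simp [hs, ht, add_comm]

section TailIntegral

variable {n : ℕ} {E F : Set (EuclideanSpace ℝ (Fin n))} {s : ℝ}

lemma tailIntegrand_nonneg (E : Set (EuclideanSpace ℝ (Fin n))) (s : ℝ)
    (q y : EuclideanSpace ℝ (Fin n)) :
    0 ≤ E.indicator (fun _ ↦ (1 : ℝ)) y / ‖q - y‖ ^ ((n : ℝ) + s) :=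
  div_nonneg (indicator_nonneg (fun _ _ ↦ zero_le_one) y) (by positivity)

lemma tailIntegrand_le_norm_rpow_neg (E : Set (EuclideanSpace ℝ (Fin n))) (s : ℝ)
    (y : EuclideanSpace ℝ (Fin n)) :
    E.indicator (fun _ ↦ (1 : ℝ)) y / ‖0 - y‖ ^ ((n : ℝ) + s) ≤ ‖y‖ ^ (-((n : ℝ) + s)) := by
  rw [zero_sub, norm_neg, Real.rpow_neg (norm_nonneg _), ← one_div]
  exact div_le_div_of_nonneg_right (indicator_le_self' (fun _ _ ↦ zero_le_one (α := ℝ)) y)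
    (by positivity)

lemma measurable_tailIntegrand (hE : MeasurableSet E) (s : ℝ) (q : EuclideanSpace ℝ (Fin n)) :
    Measurable fun y ↦ E.indicator (fun _ ↦ (1 : ℝ)) y / ‖q - y‖ ^ ((n : ℝ) + s) :=
  (measurable_const.indicator hE).div (by fun_prop)

lemma integrableOn_tailIntegrand (hE : MeasurableSet E) (hs : 0 < s) :
    IntegrableOn (fun y ↦ E.indicator (fun _ ↦ (1 : ℝ)) y / ‖0 - y‖ ^ ((n : ℝ) + s))
      (ball 0 1)ᶜ := by
  have hmaj := integrableOn_compl_ball_norm_rpow_neg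
    (volume : Measure (EuclideanSpace ℝ (Fin n))) hs
  rw [finrank_euclideanSpace_fin] at hmaj
  refine hmaj.mono' (measurable_tailIntegrand hE s 0).aestronglyMeasurable
    (.of_forall fun y ↦ ?_)
  rw [Real.norm_of_nonneg (tailIntegrand_nonneg E s 0 y)]
  exact tailIntegrand_le_norm_rpow_neg E s y

lemma tailIntegral_nonneg (E : Set (EuclideanSpace ℝ (Fin n))) (s : ℝ)
    (q : EuclideanSpace ℝ (Fin n)) (r : ℝ) : 0 ≤ tailIntegral n E s q r :=
  setIntegral_nonneg measurableSet_ball.compl fun y _ ↦ tailIntegrand_nonneg E s q y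

lemma tailIntegral_le (hE : MeasurableSet E) (hs : 0 < s) :
    tailIntegral n E s 0 1 ≤ n * volume.real (ball (0 : EuclideanSpace ℝ (Fin n)) 1) / s := by
  have hmaj := integrableOn_compl_ball_norm_rpow_neg
    (volume : Measure (EuclideanSpace ℝ (Fin n))) hs
  have hval := integral_compl_ball_norm_rpow_neg
    (volume : Measure (EuclideanSpace ℝ (Fin n))) hs
  rw [finrank_euclideanSpace_fin] at hmaj hval
  rw [← hval]
  exact setIntegral_mono_on (integrableOn_tailIntegrand hE hs) hmaj measurableSet_ball.compl
    fun y _ ↦ tailIntegrand_le_norm_rpow_neg E s y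

lemma tailIntegral_le_measureReal (hE : MeasurableSet E) (hEfin : volume E ≠ ⊤) (hs : 0 ≤ s) :
    tailIntegral n E s 0 1 ≤ volume.real E := by
  have hind : Integrable (E.indicator (1 : EuclideanSpace ℝ (Fin n) → ℝ)) :=
    (integrable_indicator_iff hE).2 (integrableOn_const hEfin)
  have hle : ∀ y ∈ (ball (0 : EuclideanSpace ℝ (Fin n)) 1)ᶜ,
      E.indicator (fun _ ↦ (1 : ℝ)) y / ‖0 - y‖ ^ ((n : ℝ) + s) ≤ E.indicator 1 y := by
    intro y hy
    have hy1 : 1 ≤ ‖0 - y‖ := by simpa using hy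
    exact div_le_self (indicator_nonneg (fun _ _ ↦ zero_le_one) y)
      (Real.one_le_rpow hy1 (by positivity))
  have htail : IntegrableOn
      (fun y ↦ E.indicator (fun _ ↦ (1 : ℝ)) y / ‖0 - y‖ ^ ((n : ℝ) + s)) (ball 0 1)ᶜ := by
    refine hind.integrableOn.mono' (measurable_tailIntegrand hE s 0).aestronglyMeasurable
      ((ae_restrict_iff' measurableSet_ball.compl).2 (.of_forall fun y hy ↦ ?_))
    rw [Real.norm_of_nonneg (tailIntegrand_nonneg E s 0 y)]
    exact hle y hy
  calc tailIntegral n E s 0 1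
      ≤ ∫ y in (ball 0 1)ᶜ, E.indicator 1 y :=
        setIntegral_mono_on htail hind.integrableOn measurableSet_ball.compl hle
    _ ≤ ∫ y, E.indicator 1 y :=
        setIntegral_le_integral hind (.of_forall (indicator_nonneg fun _ _ ↦ zero_le_one))
    _ = volume.real E := integral_indicator_one hE

lemma tailIntegral_union_add_inter (hE : MeasurableSet E) (hF : MeasurableSet F) (hs : 0 < s) :
    tailIntegral n (E ∪ F) s 0 1 + tailIntegral n (E ∩ F) s 0 1
      = tailIntegral n E s 0 1 + tailIntegral n F s 0 1 := by
  unfold tailIntegral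
  rw [← integral_add (integrableOn_tailIntegrand (hE.union hF) hs)
      (integrableOn_tailIntegrand (hE.inter hF) hs),
    ← integral_add (integrableOn_tailIntegrand hE hs) (integrableOn_tailIntegrand hF hs)]
  simp only [← add_div, indicator_union_add_indicator_inter]

end TailIntegral

section AlphaS

variable {n : ℕ} {E F : Set (EuclideanSpace ℝ (Fin n))} {s : ℝ}

lemma alphaS_nonneg (E : Set (EuclideanSpace ℝ (Fin n))) (hs : 0 ≤ s) : 0 ≤ alphaS n E s :=
  mul_nonneg hs (tailIntegral_nonneg E s 0 1)

lemma alphaS_le (hE : MeasurableSet E) (hs : 0 < s) :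
    alphaS n E s ≤ n * volume.real (ball (0 : EuclideanSpace ℝ (Fin n)) 1) := by
  calc alphaS n E s ≤ s * (n * volume.real (ball (0 : EuclideanSpace ℝ (Fin n)) 1) / s) :=
        mul_le_mul_of_nonneg_left (tailIntegral_le hE hs) hs.le
    _ = n * volume.real (ball (0 : EuclideanSpace ℝ (Fin n)) 1) := by field_simp

lemma alphaS_union_add_inter (hE : MeasurableSet E) (hF : MeasurableSet F) (hs : 0 < s) :
    alphaS n (E ∪ F) s + alphaS n (E ∩ F) s = alphaS n E s + alphaS n F s := by
  simp only [alphaS, ← mul_add, tailIntegral_union_add_inter hE hF hs]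

lemma alphaS_union_le (hE : MeasurableSet E) (hF : MeasurableSet F) (hs : 0 < s) :
    alphaS n (E ∪ F) s ≤ alphaS n E s + alphaS n F s := by
  linarith [alphaS_union_add_inter hE hF hs, alphaS_nonneg (E ∩ F) hs.le]

lemma isBoundedUnder_ge_alphaS (E : Set (EuclideanSpace ℝ (Fin n))) :
    IsBoundedUnder (· ≥ ·) (𝓝[>] 0) (alphaS n E) :=
  isBoundedUnder_of_eventually_ge <|
    eventually_nhdsWithin_of_forall fun _ hs ↦ alphaS_nonneg E (le_of_lt hs)

lemma isBoundedUnder_le_alphaS (hE : MeasurableSet E) :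
    IsBoundedUnder (· ≤ ·) (𝓝[>] 0) (alphaS n E) :=
  isBoundedUnder_of_eventually_le <| eventually_nhdsWithin_of_forall fun _ hs ↦ alphaS_le hE hs

lemma tendsto_alphaS_of_measure_ne_top (hE : MeasurableSet E) (hEfin : volume E ≠ ⊤) :
    Tendsto (alphaS n E) (𝓝[>] 0) (𝓝 0) := by
  have hlin : Tendsto (fun s : ℝ ↦ s * volume.real E) (𝓝[>] 0) (𝓝 0) := by
    simpa using (tendsto_id.mul_const (volume.real E)).mono_left (nhdsWithin_le_nhds (a := 0))
  refine squeeze_zero' (eventually_nhdsWithin_of_forall fun _ hs ↦ alphaS_nonneg E (le_of_lt hs))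
    (eventually_nhdsWithin_of_forall fun s hs ↦ ?_) hlin
  exact mul_le_mul_of_nonneg_left (tailIntegral_le_measureReal hE hEfin (le_of_lt hs))
    (le_of_lt hs)

theorem alphaBar_union_le (hE : MeasurableSet E) (hF : MeasurableSet F) :
    alphaBar n (E ∪ F) ≤ alphaBar n E + alphaBar n F :=
  calc alphaBar n (E ∪ F) ≤ limsup (alphaS n E + alphaS n F) (𝓝[>] 0) :=
        limsup_le_limsup (eventually_nhdsWithin_of_forall fun _ hs ↦ alphaS_union_le hE hF hs)
          (isBoundedUnder_ge_alphaS _).isCoboundedUnder_le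
          (isBoundedUnder_le_add (isBoundedUnder_le_alphaS hE) (isBoundedUnder_le_alphaS hF))
    _ ≤ alphaBar n E + alphaBar n F :=
        limsup_add_le (isBoundedUnder_ge_alphaS E) (isBoundedUnder_le_alphaS hE)
          (isBoundedUnder_ge_alphaS F).isCoboundedUnder_le (isBoundedUnder_le_alphaS hF)

theorem tendsto_alphaS_union (hE : MeasurableSet E) (hF : MeasurableSet F)
    (hEF : volume (E ∩ F) ≠ ⊤) {aE aF : ℝ} (haE : Tendsto (alphaS n E) (𝓝[>] 0) (𝓝 aE))
    (haF : Tendsto (alphaS n F) (𝓝[>] 0) (𝓝 aF)) :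
    Tendsto (alphaS n (E ∪ F)) (𝓝[>] 0) (𝓝 (aE + aF)) := by
  have hinter := tendsto_alphaS_of_measure_ne_top (hE.inter hF) hEF
  have hsum : Tendsto (fun s ↦ alphaS n E s + alphaS n F s - alphaS n (E ∩ F) s) (𝓝[>] 0)
      (𝓝 (aE + aF)) := by
    simpa using (haE.add haF).sub hinter
  refine hsum.congr' ?_
  filter_upwards [self_mem_nhdsWithin] with s hs
  linarith [alphaS_union_add_inter hE hF hs]

end AlphaS

theorem alphaBar_subadditive_general (n : ℕ) (E F : Set (EuclideanSpace ℝ (Fin n)))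
    (hE : MeasurableSet E) (hF : MeasurableSet F)
    (r : ℝ) (q : EuclideanSpace ℝ (Fin n))
    (h : (E ∩ F) \ ball q r = ∅) :
    alphaBar n (E ∪ F) ≤ alphaBar n E + alphaBar n F ∧
      ∀ aE aF : ℝ, Tendsto (alphaS n E) (𝓝[>] (0 : ℝ)) (𝓝 aE) →
        Tendsto (alphaS n F) (𝓝[>] (0 : ℝ)) (𝓝 aF) →
        Tendsto (alphaS n (E ∪ F)) (𝓝[>] (0 : ℝ)) (𝓝 (aE + aF)) := by
  have hEF : volume (E ∩ F) ≠ ⊤ :=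
    ((measure_mono (sdiff_eq_empty.1 h)).trans_lt measure_ball_lt_top).ne
  exact ⟨alphaBar_union_le hE hF, fun _ _ ↦ tendsto_alphaS_union hE hF hEF⟩

/-- Additivity: if `(E ∩ F) \ B_r(q) = ∅` for some `r > 0`, `q ∈ ℝⁿ`, then
`ᾱ(E ∪ F) ≤ ᾱ(E) + ᾱ(F)`; and if `α(E)` and `α(F)` both exist, then `α(E ∪ F)`
exists and equals `α(E) + α(F)`. -/
theorem alphaBar_subadditive (n : ℕ) (E F : Set (EuclideanSpace ℝ (Fin n)))
    (hE : MeasurableSet E) (hF : MeasurableSet F)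
    (r : ℝ) (hr : 0 < r) (q : EuclideanSpace ℝ (Fin n))
    (h : (E ∩ F) \ ball q r = ∅) :
    alphaBar n (E ∪ F) ≤ alphaBar n E + alphaBar n F ∧
      ∀ aE aF : ℝ, Tendsto (alphaS n E) (𝓝[>] (0 : ℝ)) (𝓝 aE) →
        Tendsto (alphaS n F) (𝓝[>] (0 : ℝ)) (𝓝 aF) →
        Tendsto (alphaS n (E ∪ F)) (𝓝[>] (0 : ℝ)) (𝓝 (aE + aF)) :=
  alphaBar_subadditive_general n E F hE hF r q h
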